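/- For every reflection t ∈ T of W, the subset X_t of H_b is closed under taking inverses. Moreover, if t_1, ..., t_r, t_{r+1} are reflections in T, then the product of subsets satisfies X_{t_1} ⋯ X_{t_r} X_{t_{r+1}} = X_{t_1} ⋯ X_{t_r} X_{t_1 ⋯ t_r t_{r+1} t_r ⋯ t_1}. -/

import Mathlib

/-! Every reflection is the permutation matrix of a transposition `(k l)`, and `X_{(k l)}` is the
image, under the diagonal embedding `(Fin n → Fˣ) →* GL_n(F)`, of the set of diagonals of
`h_{k,l}(α)`, `α ∈ F_b`. These sets live in a commutative group, so the `X_t` commute with each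
other and the product rule reduces, by induction on `r`, to `X_t X_s = X_t X_{tst}`. This is
trivial unless `t` and `s` share exactly one point, say `t = (a c)` and `s = (a e)`, where it
follows from `h_{a,c}(α) h_{a,e}(β) = h_{a,c}(αβ) h_{c,e}(β)`. -/

noncomputable section

open scoped Pointwise

/-- The general linear group `GL_n(K)`. -/
abbrev GLn (K : Type) [Field K] (n : ℕ) : Type := GL (Fin n) K

/-- `g` is a permutation matrix. -/
def IsPermMat {K : Type} [Field K] {n : ℕ} (g : GLn K n) : Prop :=
  ∃ σ : Equiv.Perm (Fin n),
    ∀ i j : Fin n, (g : Matrix (Fin n) (Fin n) K) i j = if σ j = i then 1 else 0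

/-- `W`, the group of permutation matrices in `GL_n(K)`. -/
def Wset (K : Type) [Field K] (n : ℕ) : Set (GLn K n) := {g | IsPermMat g}

/-- The set `S = {s_1, …, s_{n-1}}` of Coxeter generators of `W`: the matrices of the
adjacent transpositions `(i, i+1)`. -/
def Sset (K : Type) [Field K] (n : ℕ) : Set (GLn K n) :=
  {g | ∃ i j : Fin n, (i : ℕ) + 1 = (j : ℕ) ∧
    ∀ k l : Fin n, (g : Matrix (Fin n) (Fin n) K) k l = if Equiv.swap i j l = k then 1 else 0}

/-- The set `𝒯 = { w s_i w⁻¹ : w ∈ W, s_i ∈ S }` of reflections of `W`. -/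
def Tset (K : Type) [Field K] (n : ℕ) : Set (GLn K n) :=
  {t | ∃ w ∈ Wset K n, ∃ s ∈ Sset K n, t = w * s * w⁻¹}

/-- `H_b`: the group of diagonal matrices whose entries are `b`-th roots of unity
(i.e. entries in `F_b`). -/
def Hbset (K : Type) [Field K] (n b : ℕ) : Set (GLn K n) :=
  {g | (∀ i j : Fin n, i ≠ j → (g : Matrix (Fin n) (Fin n) K) i j = 0) ∧
    ∀ i : Fin n, (g : Matrix (Fin n) (Fin n) K) i i ^ b = 1}

/-- The group `WH_b`: the set of products `w * d` with `w ∈ W` and `d ∈ H_b`. -/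
def WHbset (K : Type) [Field K] (n b : ℕ) : Set (GLn K n) :=
  {x | ∃ w ∈ Wset K n, ∃ d ∈ Hbset K n b, x = w * d}

/-- The length function on monomial matrices: the number of inversions of the underlying
permutation.  For `x = w d ∈ WH_b` this is the Coxeter length `ℓ(w)`, i.e. `len` is the
length function of `W` lifted to `WH_b` via `ℓ(wd) = ℓ(dw) = ℓ(w)`. -/
def len {K : Type} [Field K] {n : ℕ} (g : GLn K n) : ℕ :=
  Set.ncard {p : Fin n × Fin n | p.1 < p.2 ∧ ∃ i i' : Fin n, i' < i ∧
    (g : Matrix (Fin n) (Fin n) K) i p.1 ≠ 0 ∧ (g : Matrix (Fin n) (Fin n) K) i' p.2 ≠ 0}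

/-- The diagonal matrix `h_{k,l}(α) = h_k(α) h_l((-1)^{b-1} α⁻¹)`. -/
def hmat (K : Type) [Field K] {n : ℕ} (b : ℕ) (k l : Fin n) (α : K) :
    Matrix (Fin n) (Fin n) K :=
  Matrix.diagonal fun p => if p = k then α else if p = l then (-1 : K) ^ (b - 1) * α⁻¹ else 1

/-- For a reflection `t` interchanging the `k`-th and `l`-th standard basis vectors
(`t = w s_i w⁻¹`), the subset `X_t = { w h_{i,i+1}(α) w⁻¹ : α ∈ F_b } =
{ h_{k,l}(α) : α^b = 1 }` of `H_b`. -/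
def Xset (K : Type) [Field K] (n b : ℕ) (t : GLn K n) : Set (GLn K n) :=
  {d | ∃ k l : Fin n, ∃ α : K, α ^ b = 1 ∧ k ≠ l ∧
    (∀ p q : Fin n, (t : Matrix (Fin n) (Fin n) K) p q = if Equiv.swap k l q = p then 1 else 0) ∧
    (d : Matrix (Fin n) (Fin n) K) = hmat K b k l α}

/-- `X_s = { h_{k,l}(α) : α^b = 1 }` for the simple reflection `s` interchanging the
`k`-th and `l`-th standard basis vectors. -/
def XsPair (K : Type) [Field K] {n : ℕ} (b : ℕ) (k l : Fin n) : Set (GLn K n) :=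
  {d | ∃ α : K, α ^ b = 1 ∧ (d : Matrix (Fin n) (Fin n) K) = hmat K b k l α}

/-- The product `X_1 ⋯ X_r` of a list of subsets of a monoid. -/
def SetProd {G : Type} [Monoid G] : List (Set G) → Set G
  | [] => {1}
  | X :: L => X * SetProd L

/-- `U`: the group of upper triangular unipotent matrices. -/
def Uset (K : Type) [Field K] (n : ℕ) : Set (GLn K n) :=
  {g | (∀ i j : Fin n, j < i → (g : Matrix (Fin n) (Fin n) K) i j = 0) ∧
    ∀ i : Fin n, (g : Matrix (Fin n) (Fin n) K) i i = 1}

/-- `H_a`: the group of diagonal matrices with entries in `F_a` (the `a`-th roots of unity). -/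
def Haset (K : Type) [Field K] (n a : ℕ) : Set (GLn K n) :=
  {g | (∀ i j : Fin n, i ≠ j → (g : Matrix (Fin n) (Fin n) K) i j = 0) ∧
    ∀ i : Fin n, (g : Matrix (Fin n) (Fin n) K) i i ^ a = 1}

/-- `B_a = H_a U`. -/
def Baset (K : Type) [Field K] (n a : ℕ) : Set (GLn K n) :=
  {g | ∃ h ∈ Haset K n a, ∃ u ∈ Uset K n, g = h * u}

theorem SetProd_eq_prod {G : Type} [Monoid G] : ∀ l : List (Set G), SetProd l = l.prod
  | [] => Set.singleton_one
  | X :: l => congrArg (X * ·) (SetProd_eq_prod l)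

section Conjugation

variable {M N : Type*} [Monoid M] [Monoid N] {R : Set M}

theorem List.prod_cons_mul_mul_reverse_prod (t t' : M) (L : List M) :
    (t :: L).prod * t' * (t :: L).reverse.prod = t * (L.prod * t' * L.reverse.prod) * t := by
  simp [mul_assoc]

theorem List.prod_mul_mul_reverse_prod_mem (hR : ∀ t ∈ R, ∀ s ∈ R, t * s * t ∈ R)
    {L : List M} (hL : ∀ t ∈ L, t ∈ R) {t' : M} (ht' : t' ∈ R) :
    L.prod * t' * L.reverse.prod ∈ R := by
  induction L with
  | nil => simpa using ht'
  | cons t L ih =>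
    rw [List.prod_cons_mul_mul_reverse_prod]
    exact hR t (hL t (by simp)) _ (ih fun s hs => hL s (by simp [hs]))

theorem List.prod_map_mul_eq_prod_map_mul_conj {X : M → N}
    (hR : ∀ t ∈ R, ∀ s ∈ R, t * s * t ∈ R)
    (hcomm : ∀ t ∈ R, ∀ s ∈ R, Commute (X t) (X s))
    (hstep : ∀ t ∈ R, ∀ s ∈ R, X t * X s = X t * X (t * s * t))
    {L : List M} (hL : ∀ t ∈ L, t ∈ R) {t' : M} (ht' : t' ∈ R) :
    (L.map X).prod * X t' = (L.map X).prod * X (L.prod * t' * L.reverse.prod) := by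
  induction L with
  | nil => simp
  | cons t L ih =>
    have ht : t ∈ R := hL t (by simp)
    have hLR : ∀ s ∈ L, s ∈ R := fun s hs => hL s (by simp [hs])
    set t'' := L.prod * t' * L.reverse.prod
    have ht'' : t'' ∈ R := List.prod_mul_mul_reverse_prod_mem hR hLR ht'
    have hP : Commute (X t) (L.map X).prod :=
      Commute.list_prod_right _ _ fun x hx => by
        obtain ⟨s, hs, rfl⟩ := List.mem_map.1 hx
        exact hcomm t ht s (hLR s hs)
    rw [List.prod_cons_mul_mul_reverse_prod, List.map_cons, List.prod_cons]
    calc X t * (L.map X).prod * X t'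
        = (L.map X).prod * (X t * X t'') := by
          rw [mul_assoc, ih hLR, ← mul_assoc, hP.eq, mul_assoc]
      _ = (L.map X).prod * (X t * X (t * t'' * t)) := by rw [hstep t ht t'' ht'']
      _ = X t * (L.map X).prod * X (t * t'' * t) := by rw [← mul_assoc, hP.eq]

end Conjugation

section RootFunctions

variable {F : Type} [Field F] {n : ℕ} (b : ℕ)

/-- The diagonal of `h_{k,l}(α)`, as a function into `Fˣ`. -/
def hvec (k l : Fin n) (α : Fˣ) : Fin n → Fˣ :=
  fun p => if p = k then α else if p = l then (-1) ^ (b - 1) * α⁻¹ else 1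

/-- The diagonals of the elements of `X_{(k l)}`. -/
def hvecSet (k l : Fin n) : Set (Fin n → Fˣ) :=
  hvec b k l '' (rootsOfUnity b F : Set Fˣ)

theorem neg_one_pow_pred_mem_rootsOfUnity : ((-1 : Fˣ) ^ (b - 1)) ∈ rootsOfUnity b F := by
  rw [mem_rootsOfUnity, ← pow_mul, mul_comm]
  exact Even.neg_one_pow (Nat.even_mul_pred_self b)

theorem inv_neg_one_pow {G : Type*} [Group G] [HasDistribNeg G] (m : ℕ) :
    ((-1 : G) ^ m)⁻¹ = (-1) ^ m := by
  rw [← inv_pow, inv_neg, inv_one]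

theorem hvec_inv (k l : Fin n) (α : Fˣ) : (hvec b k l α)⁻¹ = hvec b k l α⁻¹ := by
  funext p
  simp only [hvec, Pi.inv_apply]
  split_ifs <;> simp [inv_neg_one_pow, mul_comm]

theorem hvec_swap {k l : Fin n} (hkl : k ≠ l) (α : Fˣ) :
    hvec b l k ((-1) ^ (b - 1) * α⁻¹) = hvec b k l α := by
  funext p
  simp only [hvec]
  split_ifs <;> simp_all

theorem hvec_mul_hvec {a c e : Fin n} (hac : a ≠ c) (hae : a ≠ e) (hce : c ≠ e)
    (α β : Fˣ) :
    hvec b a c α * hvec b a e β = hvec b a c (α * β) * hvec b c e β := by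
  funext p
  simp only [hvec, Pi.mul_apply]
  split_ifs <;> simp_all [mul_assoc]

theorem hvecSet_comm {k l : Fin n} (hkl : k ≠ l) : hvecSet (F := F) b l k = hvecSet b k l := by
  have key : ∀ {k l : Fin n}, k ≠ l → hvecSet (F := F) b k l ⊆ hvecSet b l k := by
    rintro k l hkl _ ⟨α, hα, rfl⟩
    exact ⟨_, mul_mem (neg_one_pow_pred_mem_rootsOfUnity b) (inv_mem hα), hvec_swap b hkl α⟩
  exact (key hkl.symm).antisymm (key hkl)

theorem inv_mem_hvecSet {k l : Fin n} {v : Fin n → Fˣ} (hv : v ∈ hvecSet b k l) :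
    v⁻¹ ∈ hvecSet b k l := by
  obtain ⟨α, hα, rfl⟩ := hv
  exact ⟨α⁻¹, inv_mem hα, (hvec_inv b k l α).symm⟩

theorem hvecSet_mul_hvecSet {a c e : Fin n} (hac : a ≠ c) (hae : a ≠ e) (hce : c ≠ e) :
    hvecSet (F := F) b a c * hvecSet b a e = hvecSet b a c * hvecSet b c e := by
  ext v
  simp only [Set.mem_mul, hvecSet, Set.mem_image]
  constructor
  · rintro ⟨_, ⟨α, hα, rfl⟩, _, ⟨β, hβ, rfl⟩, rfl⟩
    exact ⟨_, ⟨α * β, mul_mem hα hβ, rfl⟩, _, ⟨β, hβ, rfl⟩,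
      (hvec_mul_hvec b hac hae hce α β).symm⟩
  · rintro ⟨_, ⟨γ, hγ, rfl⟩, _, ⟨β, hβ, rfl⟩, rfl⟩
    refine ⟨_, ⟨γ * β⁻¹, mul_mem hγ (inv_mem hβ), rfl⟩, _, ⟨β, hβ, rfl⟩, ?_⟩
    rw [hvec_mul_hvec b hac hae hce, inv_mul_cancel_right]

theorem hvecSet_eq_of_swap_eq {k l k' l' : Fin n} (hkl' : k' ≠ l')
    (h : Equiv.swap k l = Equiv.swap k' l') : hvecSet (F := F) b k' l' = hvecSet b k l := by
  have hk' : Equiv.swap k l k' = l' := by rw [h, Equiv.swap_apply_left]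
  have hkl : k ≠ l ∧ (k' = k ∨ k' = l) :=
    Equiv.swap_apply_ne_self_iff.1 (hk' ▸ hkl'.symm)
  rcases hkl with ⟨hkl, rfl | rfl⟩
  · rw [← hk', Equiv.swap_apply_left]
  · rw [← hk', Equiv.swap_apply_right, hvecSet_comm b hkl.symm]

theorem hvecSet_mul_hvecSet_swap_of_left {k l l' : Fin n} (hkl : k ≠ l) (hkl' : k ≠ l') :
    hvecSet (F := F) b k l * hvecSet b k l' =
      hvecSet b k l * hvecSet b (Equiv.swap k l k) (Equiv.swap k l l') := by
  rw [Equiv.swap_apply_left]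
  by_cases hl' : l' = l
  · rw [hl', Equiv.swap_apply_right, hvecSet_comm b hkl]
  · rw [Equiv.swap_apply_of_ne_of_ne hkl'.symm hl']
    exact hvecSet_mul_hvecSet b hkl hkl' (Ne.symm hl')

theorem hvecSet_mul_hvecSet_swap_of_mem {k l k' l' : Fin n} (hkl : k ≠ l) (hkl' : k' ≠ l')
    (hk' : k' = k ∨ k' = l) :
    hvecSet (F := F) b k l * hvecSet b k' l' =
      hvecSet b k l * hvecSet b (Equiv.swap k l k') (Equiv.swap k l l') := by
  rcases hk' with rfl | rfl
  · exact hvecSet_mul_hvecSet_swap_of_left b hkl hkl'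
  · rw [← hvecSet_comm b hkl, Equiv.swap_comm k]
    exact hvecSet_mul_hvecSet_swap_of_left b hkl.symm hkl'

theorem hvecSet_mul_hvecSet_swap {k l k' l' : Fin n} (hkl : k ≠ l) (hkl' : k' ≠ l') :
    hvecSet (F := F) b k l * hvecSet b k' l' =
      hvecSet b k l * hvecSet b (Equiv.swap k l k') (Equiv.swap k l l') := by
  by_cases hk' : k' = k ∨ k' = l
  · exact hvecSet_mul_hvecSet_swap_of_mem b hkl hkl' hk'
  by_cases hl' : l' = k ∨ l' = l
  · rw [← hvecSet_comm b hkl', ← hvecSet_comm b ((Equiv.swap k l).injective.ne hkl')]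
    exact hvecSet_mul_hvecSet_swap_of_mem b hkl hkl'.symm hl'
  rw [not_or] at hk' hl'
  rw [Equiv.swap_apply_of_ne_of_ne hk'.1 hk'.2, Equiv.swap_apply_of_ne_of_ne hl'.1 hl'.2]

end RootFunctions

section Matrices

variable {F : Type} [Field F] {n : ℕ}

variable (F n) in
/-- Its `(i, j)` entry is `1` iff `σ j = i`, as in `IsPermMat`: the transpose of Mathlib's
`σ.permMatrix`. -/
def permMatrixUnits : Equiv.Perm (Fin n) →* GLn F n :=
  (Matrix.permMatrixHom (n := Fin n) (R := F)).toHomUnits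

theorem coe_permMatrixUnits_apply (σ : Equiv.Perm (Fin n)) (i j : Fin n) :
    (permMatrixUnits F n σ : Matrix (Fin n) (Fin n) F) i j = if σ j = i then 1 else 0 := by
  simp [permMatrixUnits, PEquiv.toMatrix_apply, Equiv.symm_apply_eq, @eq_comm _ i]

theorem eq_permMatrixUnits_iff {g : GLn F n} {σ : Equiv.Perm (Fin n)} :
    g = permMatrixUnits F n σ ↔
      ∀ i j, (g : Matrix (Fin n) (Fin n) F) i j = if σ j = i then 1 else 0 := by
  simp only [Units.ext_iff, ← Matrix.ext_iff, coe_permMatrixUnits_apply]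

theorem permMatrixUnits_injective : Function.Injective (permMatrixUnits F n) := by
  intro σ τ h
  refine Equiv.ext fun j => ?_
  have := congrArg (fun g : GLn F n => (g : Matrix (Fin n) (Fin n) F) (σ j) j) h
  simpa [coe_permMatrixUnits_apply, eq_comm] using this

theorem permMatrixUnits_swap_conj (k l k' l' : Fin n) :
    permMatrixUnits F n (Equiv.swap k l) * permMatrixUnits F n (Equiv.swap k' l') *
        permMatrixUnits F n (Equiv.swap k l) =
      permMatrixUnits F n (Equiv.swap (Equiv.swap k l k') (Equiv.swap k l l')) := by
  rw [← map_mul, ← map_mul, Equiv.swap_apply_apply, Equiv.swap_inv]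

variable (F n) in
def swapMatrices : Set (GLn F n) := permMatrixUnits F n '' {σ | σ.IsSwap}

theorem Tset_subset_swapMatrices : Tset F n ⊆ swapMatrices F n := by
  rintro _ ⟨w, ⟨σ, hw⟩, s, ⟨i, j, hij, hs⟩, rfl⟩
  rw [← eq_permMatrixUnits_iff] at hw hs
  subst hw hs
  have hij' : σ i ≠ σ j := σ.injective.ne (Fin.ne_of_val_ne (by omega))
  refine ⟨Equiv.swap (σ i) (σ j), ⟨σ i, σ j, hij', rfl⟩, ?_⟩
  rw [Equiv.swap_apply_apply, map_mul, map_mul, map_inv]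

theorem mul_mul_mem_swapMatrices {t s : GLn F n} (ht : t ∈ swapMatrices F n)
    (hs : s ∈ swapMatrices F n) : t * s * t ∈ swapMatrices F n := by
  obtain ⟨_, ⟨k, l, -, rfl⟩, rfl⟩ := ht
  obtain ⟨_, ⟨k', l', hkl', rfl⟩, rfl⟩ := hs
  rw [permMatrixUnits_swap_conj]
  exact ⟨_, ⟨_, _, (Equiv.swap k l).injective.ne hkl', rfl⟩, rfl⟩

variable (F n) in
def diagonalUnits : (Fin n → Fˣ) →* GLn F n :=
  (Units.map (Matrix.diagonalRingHom (Fin n) F : (Fin n → F) →* Matrix (Fin n) (Fin n) F)).comp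
    MulEquiv.piUnits.symm.toMonoidHom

theorem coe_diagonalUnits (v : Fin n → Fˣ) :
    (diagonalUnits F n v : Matrix (Fin n) (Fin n) F) = Matrix.diagonal fun i => (v i : F) :=
  rfl

theorem coe_diagonalUnits_hvec (b : ℕ) (k l : Fin n) (α : Fˣ) :
    (diagonalUnits F n (hvec b k l α) : Matrix (Fin n) (Fin n) F) = hmat F b k l α := by
  rw [coe_diagonalUnits, hmat]
  congr 1
  funext p
  simp only [hvec]
  split_ifs <;> simp

end Matrices

section Xset

variable {F : Type} [Field F] {n b : ℕ}

theorem Xset_permMatrixUnits_swap (hb : 0 < b) {k l : Fin n} (hkl : k ≠ l) :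
    Xset F n b (permMatrixUnits F n (Equiv.swap k l)) = diagonalUnits F n '' hvecSet b k l := by
  ext d
  constructor
  · rintro ⟨k', l', α, hα, hkl', ht, hd⟩
    rw [← eq_permMatrixUnits_iff, permMatrixUnits_injective.eq_iff] at ht
    rw [← hvecSet_eq_of_swap_eq b hkl' ht]
    refine ⟨_, ⟨Units.ofPowEqOne α b hα hb.ne', Units.pow_ofPowEqOne hα hb.ne', rfl⟩,
      Units.ext ?_⟩
    rw [coe_diagonalUnits_hvec, Units.val_ofPowEqOne, hd]
  · rintro ⟨_, ⟨α, hα, rfl⟩, rfl⟩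
    exact ⟨k, l, α, (mem_rootsOfUnity' b α).1 hα, hkl, eq_permMatrixUnits_iff.1 rfl,
      coe_diagonalUnits_hvec b k l α⟩

theorem commute_Xset (hb : 0 < b) {t s : GLn F n} (ht : t ∈ swapMatrices F n)
    (hs : s ∈ swapMatrices F n) : Commute (Xset F n b t) (Xset F n b s) := by
  obtain ⟨_, ⟨k, l, hkl, rfl⟩, rfl⟩ := ht
  obtain ⟨_, ⟨k', l', hkl', rfl⟩, rfl⟩ := hs
  rw [Commute, SemiconjBy, Xset_permMatrixUnits_swap hb hkl, Xset_permMatrixUnits_swap hb hkl',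
    ← Set.image_mul, mul_comm, Set.image_mul]

theorem Xset_mul_Xset_conj (hb : 0 < b) {t s : GLn F n} (ht : t ∈ swapMatrices F n)
    (hs : s ∈ swapMatrices F n) :
    Xset F n b t * Xset F n b s = Xset F n b t * Xset F n b (t * s * t) := by
  obtain ⟨_, ⟨k, l, hkl, rfl⟩, rfl⟩ := ht
  obtain ⟨_, ⟨k', l', hkl', rfl⟩, rfl⟩ := hs
  rw [permMatrixUnits_swap_conj, Xset_permMatrixUnits_swap hb hkl,
    Xset_permMatrixUnits_swap hb hkl',
    Xset_permMatrixUnits_swap hb ((Equiv.swap k l).injective.ne hkl'), ← Set.image_mul,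
    ← Set.image_mul, hvecSet_mul_hvecSet_swap b hkl hkl']

theorem inv_mem_Xset (hb : 0 < b) {t d : GLn F n} (ht : t ∈ swapMatrices F n)
    (hd : d ∈ Xset F n b t) : d⁻¹ ∈ Xset F n b t := by
  obtain ⟨_, ⟨k, l, hkl, rfl⟩, rfl⟩ := ht
  rw [Xset_permMatrixUnits_swap hb hkl] at hd ⊢
  obtain ⟨v, hv, rfl⟩ := hd
  exact ⟨v⁻¹, inv_mem_hvecSet b hv, map_inv _ v⟩

end Xset

theorem Xt_inverse_closed_and_product_rule
    (F : Type) [Field F] (n b : ℕ) (hb : 0 < b) :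
    (∀ t ∈ Tset F n, ∀ d ∈ Xset F n b t, d⁻¹ ∈ Xset F n b t) ∧
    (∀ L : List (GLn F n), ∀ t' : GLn F n,
      (∀ t ∈ L, t ∈ Tset F n) → t' ∈ Tset F n →
      SetProd (L.map (Xset F n b)) * Xset F n b t' =
        SetProd (L.map (Xset F n b)) * Xset F n b (L.prod * t' * L.reverse.prod)) := by
  refine ⟨fun t ht d hd => inv_mem_Xset hb (Tset_subset_swapMatrices ht) hd, ?_⟩
  intro L t' hL ht'
  rw [SetProd_eq_prod]
  exact List.prod_map_mul_eq_prod_map_mul_conj (fun _ ht _ hs => mul_mul_mem_swapMatrices ht hs)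
    (fun _ ht _ hs => commute_Xset hb ht hs) (fun _ ht _ hs => Xset_mul_Xset_conj hb ht hs)
    (fun t ht => Tset_subset_swapMatrices (hL t ht)) (Tset_subset_swapMatrices ht')
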